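/- arXiv:1612.08387 — 2 statements merged into one kernel-verified Lean document; each statement's English description precedes it below -/
import Mathlib

section
/- Stolz–Cesàro for integrals: let μ be a measure on an interval (x₁, b), f, g : (x₁, b) → (0, ∞) measurable and locally μ-integrable, with ∫_{(x₁,x]} g dμ → ∞ as x → b⁻. If lim_{x→b⁻} f(x)/g(x) = L ∈ [0, ∞), then lim_{x→b⁻} (∫_{(x₁,x]} f dμ) / (∫_{(x₁,x]} g dμ) = L. -/
/-!
With `h := f - L g`, the hypothesis on `f / g` says `h = o(g)` at `b⁻`, and the claim says
`∫ h = o(∫ g)`. Past a point `c` where `|h| ≤ ε g`, the integral of `h` gains at most `ε ∫ g`,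
while its part over `(x₁, c]` is a constant, negligible against `∫ g → ∞`.
-/

open Filter Set Topology MeasureTheory
open scoped ENNReal

/-- The filter of real numbers tending to the (possibly infinite) extended-real
endpoint `b` from the left. -/
noncomputable def leftLimFilter (b : EReal) : Filter ℝ :=
  Filter.comap (fun x : ℝ => (x : EReal)) (nhdsWithin b (Set.Iio b))

section LeftLimFilter

variable {a : ℝ} {b : EReal}

theorem eventually_mem_Ioo_leftLimFilter (hab : (a : EReal) < b) :
    ∀ᶠ x in leftLimFilter b, a < x ∧ (x : EReal) < b := by
  filter_upwards [preimage_mem_comap (Ioo_mem_nhdsLT hab)] with x hx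
  exact ⟨EReal.coe_lt_coe_iff.mp hx.1, hx.2⟩

theorem leftLimFilter_hasBasis (hab : (a : EReal) < b) :
    (leftLimFilter b).HasBasis (fun x₀ : ℝ => a < x₀ ∧ (x₀ : EReal) < b)
      (fun x₀ => {x | x₀ < x ∧ (x : EReal) < b}) := by
  refine ⟨fun s => ⟨fun hs => ?_, fun ⟨x₀, hx₀, hsub⟩ =>
    mem_of_superset (eventually_mem_Ioo_leftLimFilter hx₀.2) hsub⟩⟩
  obtain ⟨t, ht, hts⟩ := mem_comap.mp hs
  obtain ⟨l, hlb, hlt⟩ := (mem_nhdsLT_iff_exists_Ioo_subset' (bot_le.trans_lt hab)).mp ht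
  obtain ⟨x₀, hx₀, hx₀b⟩ := EReal.lt_iff_exists_real_btwn.mp (max_lt hlb hab)
  refine ⟨x₀, ⟨EReal.coe_lt_coe_iff.mp (le_max_right _ _ |>.trans_lt hx₀), hx₀b⟩,
    fun x hx => hts (hlt ⟨?_, hx.2⟩)⟩
  exact (le_max_left _ _).trans_lt (hx₀.trans (EReal.coe_lt_coe_iff.mpr hx.1))

end LeftLimFilter

namespace Asymptotics

theorem isLittleO_sub_mul_iff_tendsto_div {α : Type*} {l : Filter α} {f g : α → ℝ} {L : ℝ}
    (hg : ∀ᶠ x in l, g x ≠ 0) :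
    (fun x => f x - L * g x) =o[l] g ↔ Tendsto (fun x => f x / g x) l (𝓝 L) := by
  rw [isLittleO_iff_tendsto' (hg.mono fun x hx hx0 => absurd hx0 hx),
    ← Filter.tendsto_sub_const_iff L (f := fun x => f x / g x), sub_self]
  refine tendsto_congr' (hg.mono fun x hx => ?_)
  simp only [sub_div, mul_div_cancel_right₀ L hx]

end Asymptotics

open Asymptotics

section IntegralIoc

variable {E : Type*} [NormedAddCommGroup E] [NormedSpace ℝ E] {μ : Measure ℝ}

theorem setIntegral_Ioc_add_setIntegral_Ioc {h : ℝ → E} {a c x : ℝ} (hac : a ≤ c) (hcx : c ≤ x)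
    (hh : IntegrableOn h (Ioc a x) μ) :
    ∫ y in Ioc a c, h y ∂μ + ∫ y in Ioc c x, h y ∂μ = ∫ y in Ioc a x, h y ∂μ := by
  rw [← setIntegral_union (Ioc_disjoint_Ioc_of_le le_rfl) measurableSet_Ioc
    (hh.mono_set (Ioc_subset_Ioc_right hcx)) (hh.mono_set (Ioc_subset_Ioc_left hac)),
    Ioc_union_Ioc_eq_Ioc hac hcx]

theorem norm_setIntegral_le_mul_setIntegral {h : ℝ → E} {g : ℝ → ℝ} {s : Set ℝ} {ε : ℝ}
    (hs : MeasurableSet s) (hg : IntegrableOn g s μ) (hhg : ∀ y ∈ s, ‖h y‖ ≤ ε * g y) :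
    ‖∫ y in s, h y ∂μ‖ ≤ ε * ∫ y in s, g y ∂μ := by
  rw [← integral_const_mul]
  exact norm_integral_le_of_norm_le (hg.const_mul ε) ((ae_restrict_iff' hs).mpr (ae_of_all _ hhg))

theorem norm_setIntegral_Ioc_le {h : ℝ → E} {g : ℝ → ℝ} {a c x ε : ℝ} (hac : a ≤ c)
    (hcx : c ≤ x) (hε : 0 ≤ ε) (hh : IntegrableOn h (Ioc a x) μ)
    (hg : IntegrableOn g (Ioc a x) μ) (hg_nonneg : ∀ y ∈ Ioc a x, 0 ≤ g y)
    (hhg : ∀ y ∈ Ioc c x, ‖h y‖ ≤ ε * g y) :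
    ‖∫ y in Ioc a x, h y ∂μ‖ ≤ ‖∫ y in Ioc a c, h y ∂μ‖ + ε * ∫ y in Ioc a x, g y ∂μ := by
  have hg_mono : ∫ y in Ioc c x, g y ∂μ ≤ ∫ y in Ioc a x, g y ∂μ :=
    setIntegral_mono_set hg ((ae_restrict_iff' measurableSet_Ioc).mpr (ae_of_all _ hg_nonneg))
      (Ioc_subset_Ioc_left hac).eventuallyLE
  calc ‖∫ y in Ioc a x, h y ∂μ‖
      = ‖∫ y in Ioc a c, h y ∂μ + ∫ y in Ioc c x, h y ∂μ‖ := by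
        rw [setIntegral_Ioc_add_setIntegral_Ioc hac hcx hh]
    _ ≤ ‖∫ y in Ioc a c, h y ∂μ‖ + ε * ∫ y in Ioc c x, g y ∂μ :=
        (norm_add_le _ _).trans (add_le_add_right (norm_setIntegral_le_mul_setIntegral
          measurableSet_Ioc (hg.mono_set (Ioc_subset_Ioc_left hac)) hhg) _)
    _ ≤ ‖∫ y in Ioc a c, h y ∂μ‖ + ε * ∫ y in Ioc a x, g y ∂μ := by gcongr

variable {a : ℝ} {b : EReal} {h : ℝ → E} {g : ℝ → ℝ}

theorem isLittleO_setIntegral_Ioc (hab : (a : EReal) < b)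
    (hg_nonneg : ∀ x : ℝ, a < x → (x : EReal) < b → 0 ≤ g x)
    (hh_int : ∀ x : ℝ, a < x → (x : EReal) < b → IntegrableOn h (Ioc a x) μ)
    (hg_int : ∀ x : ℝ, a < x → (x : EReal) < b → IntegrableOn g (Ioc a x) μ)
    (hg_top : Tendsto (fun x => ∫ y in Ioc a x, g y ∂μ) (leftLimFilter b) atTop)
    (hhg : h =o[leftLimFilter b] g) :
    (fun x => ∫ y in Ioc a x, h y ∂μ) =o[leftLimFilter b] (fun x => ∫ y in Ioc a x, g y ∂μ) := by
  refine isLittleO_iff.mpr fun ε hε => ?_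
  obtain ⟨c, ⟨hac, hcb⟩, hc⟩ :=
    (leftLimFilter_hasBasis hab).eventually_iff.mp (hhg.def (half_pos hε))
  set C := ‖∫ y in Ioc a c, h y ∂μ‖
  filter_upwards [eventually_mem_Ioo_leftLimFilter hcb, hg_top.eventually_ge_atTop (2 / ε * C)]
    with x ⟨hcx, hxb⟩ hCx
  have hg_nonneg_Ioc : ∀ y ∈ Ioc a x, 0 ≤ g y := fun y hy =>
    hg_nonneg y hy.1 ((EReal.coe_le_coe_iff.mpr hy.2).trans_lt hxb)
  have hhg_Ioc : ∀ y ∈ Ioc c x, ‖h y‖ ≤ ε / 2 * g y := fun y hy => by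
    simpa only [Real.norm_of_nonneg (hg_nonneg_Ioc y ⟨hac.trans hy.1, hy.2⟩)] using
      hc ⟨hy.1, (EReal.coe_le_coe_iff.mpr hy.2).trans_lt hxb⟩
  have hax : a < x := hac.trans hcx
  have hC : C ≤ ε / 2 * ∫ y in Ioc a x, g y ∂μ := by
    calc C = ε / 2 * (2 / ε * C) := by field_simp
      _ ≤ ε / 2 * ∫ y in Ioc a x, g y ∂μ := by gcongr
  calc ‖∫ y in Ioc a x, h y ∂μ‖
      ≤ C + ε / 2 * ∫ y in Ioc a x, g y ∂μ :=
        norm_setIntegral_Ioc_le hac.le hcx.le (half_pos hε).le (hh_int x hax hxb)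
          (hg_int x hax hxb) hg_nonneg_Ioc hhg_Ioc
    _ ≤ ε * ‖∫ y in Ioc a x, g y ∂μ‖ := by
        rw [Real.norm_of_nonneg (setIntegral_nonneg measurableSet_Ioc hg_nonneg_Ioc)]
        linarith

end IntegralIoc

theorem stolz_cesaro_integrals_general
    (x₁ : ℝ) (b : EReal) (hb : (x₁ : EReal) < b)
    (μ : Measure ℝ) (f g : ℝ → ℝ)
    (hg_pos : ∀ x : ℝ, x₁ < x → (x : EReal) < b → 0 < g x)
    (hf_int : ∀ x : ℝ, x₁ < x → (x : EReal) < b → IntegrableOn f (Set.Ioc x₁ x) μ)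
    (hg_int : ∀ x : ℝ, x₁ < x → (x : EReal) < b → IntegrableOn g (Set.Ioc x₁ x) μ)
    (hg_top : Tendsto (fun x => ∫ y in Set.Ioc x₁ x, g y ∂μ) (leftLimFilter b) atTop)
    (L : ℝ)
    (hL : Tendsto (fun x => f x / g x) (leftLimFilter b) (nhds L)) :
    Tendsto (fun x => (∫ y in Set.Ioc x₁ x, f y ∂μ) / (∫ y in Set.Ioc x₁ x, g y ∂μ))
      (leftLimFilter b) (nhds L) := by
  have hx_mem := eventually_mem_Ioo_leftLimFilter hb
  have hfg_int x (hx : x₁ < x) (hxb : (x : EReal) < b) :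
      IntegrableOn (fun y => f y - L * g y) (Ioc x₁ x) μ :=
    (hf_int x hx hxb).sub ((hg_int x hx hxb).const_mul L)
  have hfg : (fun x => f x - L * g x) =o[leftLimFilter b] g :=
    (isLittleO_sub_mul_iff_tendsto_div (hx_mem.mono fun x hx => (hg_pos x hx.1 hx.2).ne')).mpr hL
  have hFG := isLittleO_setIntegral_Ioc hb (fun x hx hxb => (hg_pos x hx hxb).le) hfg_int
    hg_int hg_top hfg
  refine (isLittleO_sub_mul_iff_tendsto_div (hg_top.eventually_ne_atTop 0)).mp
    (hFG.congr' ?_ EventuallyEq.rfl)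
  filter_upwards [hx_mem] with x ⟨hx, hxb⟩
  rw [integral_sub (hf_int x hx hxb) ((hg_int x hx hxb).const_mul L), integral_const_mul]

/-- Stolz–Cesàro for integrals: if `f, g : (x₁, b) → (0, ∞)` are measurable and locally
`μ`-integrable, `∫_{(x₁,x]} g dμ → ∞` as `x → b⁻`, and `f/g → L ∈ [0, ∞)` at `b⁻`, then
`(∫_{(x₁,x]} f dμ) / (∫_{(x₁,x]} g dμ) → L` at `b⁻`. -/
theorem stolz_cesaro_integrals
    (x₁ : ℝ) (b : EReal) (hb : (x₁ : EReal) < b)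
    (μ : Measure ℝ) (f g : ℝ → ℝ)
    (hf_meas : Measurable f) (hg_meas : Measurable g)
    (hf_pos : ∀ x : ℝ, x₁ < x → (x : EReal) < b → 0 < f x)
    (hg_pos : ∀ x : ℝ, x₁ < x → (x : EReal) < b → 0 < g x)
    (hf_int : ∀ x : ℝ, x₁ < x → (x : EReal) < b → IntegrableOn f (Set.Ioc x₁ x) μ)
    (hg_int : ∀ x : ℝ, x₁ < x → (x : EReal) < b → IntegrableOn g (Set.Ioc x₁ x) μ)
    (hg_top : Tendsto (fun x => ∫ y in Set.Ioc x₁ x, g y ∂μ) (leftLimFilter b) atTop)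
    (L : ℝ) (hL0 : 0 ≤ L)
    (hL : Tendsto (fun x => f x / g x) (leftLimFilter b) (nhds L)) :
    Tendsto (fun x => (∫ y in Set.Ioc x₁ x, f y ∂μ) / (∫ y in Set.Ioc x₁ x, g y ∂μ))
      (leftLimFilter b) (nhds L) :=
  stolz_cesaro_integrals_general x₁ b hb μ f g hg_pos hf_int hg_int hg_top L hL
end

section
/- Let p : (α, β) → ℝ be continuous and strictly increasing, and suppose ψ_r(x) → ∞ and ψ_s(x) → ∞ as x → β⁻, where ψ_r, ψ_s : (α, β) → (0, ∞) both have right derivatives with respect to p with (d⁺ψ_s/dp)(x) > 0 eventually near β. If lim_{x→β⁻} (d⁺ψ_r/dp)(x)/(d⁺ψ_s/dp)(x) = L exists in [0, ∞], then lim_{x→β⁻} ψ_r(x)/ψ_s(x) = L. -/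
/-!
If `d⁺ψ_r/dp ≥ c · d⁺ψ_s/dp` near `β`, a real-induction argument shows that `ψ_r - c ψ_s` is
nondecreasing near `β`, hence bounded below there, and since `ψ_s → ∞` this forces
`ψ_r/ψ_s > m` near `β` for every `m < c`. Applying this to `ψ_r` and to `-ψ_r` traps
`ψ_r/ψ_s` between any two real bounds on either side of `L`.
-/

open Filter Set Topology MeasureTheory
open scoped ENNReal

/-- `f'` is the right derivative `d⁺f/dp` of `f` with respect to `p` at `x`. -/
def HasRightDerivWrt (f p : ℝ → ℝ) (f' x : ℝ) : Prop :=
  Tendsto (fun ε => (f (x + ε) - f x) / (p (x + ε) - p x)) (𝓝[>] 0) (𝓝 f')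

namespace HasRightDerivWrt

variable {f g p : ℝ → ℝ} {f' g' x : ℝ}

theorem sub (hf : HasRightDerivWrt f p f' x) (hg : HasRightDerivWrt g p g' x) :
    HasRightDerivWrt (fun t => f t - g t) p (f' - g') x :=
  (Tendsto.sub hf hg).congr fun ε => by ring

theorem const_mul (c : ℝ) (hf : HasRightDerivWrt f p f' x) :
    HasRightDerivWrt (fun t => c * f t) p (c * f') x :=
  (Tendsto.const_mul c hf).congr fun ε => by ring

theorem neg (hf : HasRightDerivWrt f p f' x) : HasRightDerivWrt (-f) p (-f') x :=
  (Tendsto.neg hf).congr fun ε => by simp only [Pi.neg_apply]; ring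

theorem eventually_mul_sub_lt_sub {c : ℝ} (hf : HasRightDerivWrt f p f' x) (hc : c < f')
    (hp : ∀ᶠ u in 𝓝[>] x, p x < p u) : ∀ᶠ u in 𝓝[>] x, c * (p u - p x) < f u - f x := by
  have hshift : Tendsto (fun u => u - x) (𝓝[>] x) (𝓝[>] 0) :=
    tendsto_nhdsWithin_of_tendsto_nhds_of_eventually_within _
      (((continuous_sub_right x).tendsto' x 0 (sub_self x)).mono_left nhdsWithin_le_nhds)
      (eventually_mem_nhdsWithin.mono fun u hu => mem_Ioi.2 (sub_pos.2 hu))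
  filter_upwards [hshift.eventually (hf.eventually (eventually_gt_nhds hc)), hp]
    with u hslope hpu
  rw [add_sub_cancel] at hslope
  exact (lt_div_iff₀ (sub_pos.2 hpu)).1 hslope

end HasRightDerivWrt

theorem le_of_hasRightDerivWrt_nonneg {f p D : ℝ → ℝ} {x y : ℝ} (hxy : x ≤ y)
    (hf : ContinuousOn f (Icc x y)) (hp : ContinuousOn p (Icc x y))
    (hp_mono : StrictMonoOn p (Icc x y))
    (hD : ∀ t ∈ Ico x y, HasRightDerivWrt f p (D t) t) (hD0 : ∀ t ∈ Ico x y, 0 ≤ D t) :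
    f x ≤ f y := by
  have slack : ∀ ε > 0, f x ≤ f y + ε * (p y - p x) := by
    intro ε hε
    let S := {t | f x ≤ f t + ε * (p t - p x)}
    have hS : IsClosed (S ∩ Icc x y) := by
      rw [inter_comm]
      exact ContinuousOn.preimage_isClosed_of_isClosed
        (hf.add (continuousOn_const.mul (hp.sub continuousOn_const))) isClosed_Icc isClosed_Ici
    refine hS.Icc_subset_of_forall_mem_nhdsWithin (by simp [S]) (fun t ⟨htS, ht⟩ => ?_)
      ⟨hxy, le_rfl⟩
    have hp_right : ∀ᶠ u in 𝓝[>] t, p t < p u := by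
      filter_upwards [Ioo_mem_nhdsGT ht.2] with u hu
      exact hp_mono ⟨ht.1, ht.2.le⟩ ⟨ht.1.trans hu.1.le, hu.2.le⟩ hu.1
    filter_upwards [(hD t ht).eventually_mul_sub_lt_sub (neg_lt_zero.2 hε |>.trans_le (hD0 t ht))
      hp_right] with u hu
    have htS : f x ≤ f t + ε * (p t - p x) := htS
    show f x ≤ f u + ε * (p u - p x)
    linarith
  have hlim : Tendsto (fun ε => f y + ε * (p y - p x)) (𝓝[>] 0) (𝓝 (f y)) :=
    ((continuous_const.add (continuous_id.mul continuous_const)).tendsto' 0 _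
      (by simp)).mono_left nhdsWithin_le_nhds
  exact ge_of_tendsto hlim (eventually_mem_nhdsWithin.mono slack)

theorem eventually_leftLimFilter_iff {β : EReal} (hβ : ⊥ < β) {P : ℝ → Prop} :
    (∀ᶠ x in leftLimFilter β, P x) ↔
      ∃ a : ℝ, (a : EReal) < β ∧ ∀ x : ℝ, a < x → (x : EReal) < β → P x := by
  rw [leftLimFilter, eventually_comap, (nhdsLT_basis_of_exists_lt ⟨⊥, hβ⟩).eventually_iff]
  constructor
  · rintro ⟨l, hlβ, hl⟩
    obtain ⟨a, hla, haβ⟩ := EReal.lt_iff_exists_real_btwn.1 hlβ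
    exact ⟨a, haβ, fun x hax hxβ => hl ⟨hla.trans (EReal.coe_lt_coe_iff.2 hax), hxβ⟩ x rfl⟩
  · rintro ⟨a, haβ, hP⟩
    exact ⟨a, haβ, fun _ hz x hx => hP x (EReal.coe_lt_coe_iff.1 (hx ▸ hz.1)) (hx ▸ hz.2)⟩

theorem exists_eventually_ge_of_hasRightDerivWrt_nonneg {α β : EReal} (hαβ : α < β)
    {p f D : ℝ → ℝ}
    (hp_mono : StrictMonoOn p {x : ℝ | α < (x : EReal) ∧ (x : EReal) < β})
    (hp_cont : ContinuousOn p {x : ℝ | α < (x : EReal) ∧ (x : EReal) < β})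
    (hf_cont : ContinuousOn f {x : ℝ | α < (x : EReal) ∧ (x : EReal) < β})
    (hD : ∀ x : ℝ, α < (x : EReal) → (x : EReal) < β → HasRightDerivWrt f p (D x) x)
    (hD0 : ∀ᶠ x in leftLimFilter β, 0 ≤ D x) :
    ∃ C, ∀ᶠ y in leftLimFilter β, C ≤ f y := by
  have hβ : ⊥ < β := bot_le.trans_lt hαβ
  obtain ⟨a, haβ, ha⟩ := (eventually_leftLimFilter_iff hβ).1 hD0
  obtain ⟨x₀, hx₀, hx₀β⟩ := EReal.lt_iff_exists_real_btwn.1 (max_lt hαβ haβ)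
  have hαx₀ : α < x₀ := (le_max_left _ _).trans_lt hx₀
  have hax₀ : a < x₀ := EReal.coe_lt_coe_iff.1 ((le_max_right _ _).trans_lt hx₀)
  refine ⟨f x₀, (eventually_leftLimFilter_iff hβ).2 ⟨x₀, hx₀β, fun y hx₀y hyβ => ?_⟩⟩
  have hIcc : Icc x₀ y ⊆ {x : ℝ | α < (x : EReal) ∧ (x : EReal) < β} := fun t ht =>
    ⟨hαx₀.trans_le (EReal.coe_le_coe_iff.2 ht.1), (EReal.coe_le_coe_iff.2 ht.2).trans_lt hyβ⟩
  have hIco t (ht : t ∈ Ico x₀ y) := hIcc (Ico_subset_Icc_self ht)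
  exact le_of_hasRightDerivWrt_nonneg hx₀y.le (hf_cont.mono hIcc) (hp_cont.mono hIcc)
    (hp_mono.mono hIcc) (fun t ht => hD t (hIco t ht).1 (hIco t ht).2)
    (fun t ht => ha t (hax₀.trans_le ht.1) (hIco t ht).2)

theorem Filter.Tendsto.eventually_lt_div_of_eventually_le_sub {ι : Type*} {l : Filter ι}
    {f s : ι → ℝ} {C c m : ℝ} (hs : Tendsto s l atTop) (hC : ∀ᶠ y in l, C ≤ f y - c * s y)
    (hm : m < c) : ∀ᶠ y in l, m < f y / s y := by
  filter_upwards [hs.eventually (eventually_gt_atTop (max 0 (-C / (c - m)))), hC] with y hy hCy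
  have hs0 : 0 < s y := (le_max_left _ _).trans_lt hy
  have hCs : -C < s y * (c - m) :=
    (div_lt_iff₀ (sub_pos.2 hm)).1 ((le_max_right _ _).trans_lt hy)
  rw [lt_div_iff₀ hs0]
  linarith

theorem eventually_lt_div_of_le_div_hasRightDerivWrt {α β : EReal} (hαβ : α < β)
    {p f s Df Ds : ℝ → ℝ}
    (hp_mono : StrictMonoOn p {x : ℝ | α < (x : EReal) ∧ (x : EReal) < β})
    (hp_cont : ContinuousOn p {x : ℝ | α < (x : EReal) ∧ (x : EReal) < β})
    (hf_cont : ContinuousOn f {x : ℝ | α < (x : EReal) ∧ (x : EReal) < β})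
    (hs_cont : ContinuousOn s {x : ℝ | α < (x : EReal) ∧ (x : EReal) < β})
    (hs_top : Tendsto s (leftLimFilter β) atTop)
    (hDf : ∀ x : ℝ, α < (x : EReal) → (x : EReal) < β → HasRightDerivWrt f p (Df x) x)
    (hDs : ∀ x : ℝ, α < (x : EReal) → (x : EReal) < β → HasRightDerivWrt s p (Ds x) x)
    (hDs_pos : ∀ᶠ x in leftLimFilter β, 0 < Ds x)
    {c m : ℝ} (hc : ∀ᶠ x in leftLimFilter β, c ≤ Df x / Ds x) (hm : m < c) :
    ∀ᶠ y in leftLimFilter β, m < f y / s y := by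
  have hD0 : ∀ᶠ x in leftLimFilter β, 0 ≤ Df x - c * Ds x := by
    filter_upwards [hc, hDs_pos] with x hcx hDsx
    exact sub_nonneg.2 ((le_div_iff₀ hDsx).1 hcx)
  obtain ⟨C, hC⟩ := exists_eventually_ge_of_hasRightDerivWrt_nonneg hαβ hp_mono hp_cont
    (hf_cont.sub (continuousOn_const.mul hs_cont))
    (fun x hαx hxβ => (hDf x hαx hxβ).sub ((hDs x hαx hxβ).const_mul c)) hD0
  exact hs_top.eventually_lt_div_of_eventually_le_sub hC hm

theorem ratio_tendsto_of_right_derivative_ratio_general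
    (α β : EReal) (hαβ : α < β)
    (p ψr ψs Dr Ds : ℝ → ℝ)
    (hp_mono : StrictMonoOn p {x : ℝ | α < (x : EReal) ∧ (x : EReal) < β})
    (hp_cont : ContinuousOn p {x : ℝ | α < (x : EReal) ∧ (x : EReal) < β})
    (hψr_cont : ContinuousOn ψr {x : ℝ | α < (x : EReal) ∧ (x : EReal) < β})
    (hψs_cont : ContinuousOn ψs {x : ℝ | α < (x : EReal) ∧ (x : EReal) < β})
    (hψs_top : Tendsto ψs (leftLimFilter β) atTop)
    (hDr : ∀ x : ℝ, α < (x : EReal) → (x : EReal) < β →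
      Tendsto (fun ε => (ψr (x + ε) - ψr x) / (p (x + ε) - p x))
        (nhdsWithin 0 (Set.Ioi 0)) (nhds (Dr x)))
    (hDs : ∀ x : ℝ, α < (x : EReal) → (x : EReal) < β →
      Tendsto (fun ε => (ψs (x + ε) - ψs x) / (p (x + ε) - p x))
        (nhdsWithin 0 (Set.Ioi 0)) (nhds (Ds x)))
    (hDs_pos : ∀ᶠ x in leftLimFilter β, 0 < Ds x)
    (L : EReal)
    (hL : Tendsto (fun x => ((Dr x / Ds x : ℝ) : EReal)) (leftLimFilter β) (nhds L)) :
    Tendsto (fun x => ((ψr x / ψs x : ℝ) : EReal)) (leftLimFilter β) (nhds L) := by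
  refine tendsto_order.2 ⟨fun b hb => ?_, fun b hb => ?_⟩
  · induction b using EReal.rec with
    | bot => exact .of_forall fun _ => EReal.bot_lt_coe _
    | top => exact absurd hb not_top_lt
    | coe m =>
      obtain ⟨c, hmc, hcL⟩ := EReal.lt_iff_exists_real_btwn.1 hb
      have hc : ∀ᶠ x in leftLimFilter β, c ≤ Dr x / Ds x :=
        (hL.eventually (eventually_gt_nhds hcL)).mono fun _ h => (EReal.coe_lt_coe_iff.1 h).le
      exact (eventually_lt_div_of_le_div_hasRightDerivWrt hαβ hp_mono hp_cont hψr_cont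
        hψs_cont hψs_top hDr hDs hDs_pos hc (EReal.coe_lt_coe_iff.1 hmc)).mono
        fun _ => EReal.coe_lt_coe_iff.2
  · induction b using EReal.rec with
    | bot => exact absurd hb not_lt_bot
    | top => exact .of_forall fun _ => EReal.coe_lt_top _
    | coe M =>
      obtain ⟨c, hLc, hcM⟩ := EReal.lt_iff_exists_real_btwn.1 hb
      have hc : ∀ᶠ x in leftLimFilter β, -c ≤ -Dr x / Ds x :=
        (hL.eventually (eventually_lt_nhds hLc)).mono fun _ h => by
          rw [neg_div, neg_le_neg_iff]; exact (EReal.coe_lt_coe_iff.1 h).le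
      exact (eventually_lt_div_of_le_div_hasRightDerivWrt hαβ hp_mono hp_cont hψr_cont.neg
        hψs_cont hψs_top (fun x hαx hxβ => HasRightDerivWrt.neg (hDr x hαx hxβ)) hDs hDs_pos hc
        (neg_lt_neg (EReal.coe_lt_coe_iff.1 hcM))).mono fun _ h => by
          rw [Pi.neg_apply, neg_div, neg_lt_neg_iff] at h; exact EReal.coe_lt_coe_iff.2 h

/-- If `ψ_r, ψ_s : (α, β) → (0, ∞)` are continuous, tend to `∞` at `β⁻`, have right
derivatives `D_r = d⁺ψ_r/dp`, `D_s = d⁺ψ_s/dp` with respect to a continuous strictly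
increasing `p`, with `D_s > 0` eventually near `β`, and `D_r/D_s → L ∈ [0, ∞]` at `β⁻`,
then `ψ_r/ψ_s → L` at `β⁻`. -/
theorem ratio_tendsto_of_right_derivative_ratio
    (α β : EReal) (hαβ : α < β)
    (p ψr ψs Dr Ds : ℝ → ℝ)
    (hp_mono : StrictMonoOn p {x : ℝ | α < (x : EReal) ∧ (x : EReal) < β})
    (hp_cont : ContinuousOn p {x : ℝ | α < (x : EReal) ∧ (x : EReal) < β})
    (hψr_pos : ∀ x : ℝ, α < (x : EReal) → (x : EReal) < β → 0 < ψr x)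
    (hψs_pos : ∀ x : ℝ, α < (x : EReal) → (x : EReal) < β → 0 < ψs x)
    (hψr_cont : ContinuousOn ψr {x : ℝ | α < (x : EReal) ∧ (x : EReal) < β})
    (hψs_cont : ContinuousOn ψs {x : ℝ | α < (x : EReal) ∧ (x : EReal) < β})
    (hψr_top : Tendsto ψr (leftLimFilter β) atTop)
    (hψs_top : Tendsto ψs (leftLimFilter β) atTop)
    (hDr : ∀ x : ℝ, α < (x : EReal) → (x : EReal) < β →
      Tendsto (fun ε => (ψr (x + ε) - ψr x) / (p (x + ε) - p x))
        (nhdsWithin 0 (Set.Ioi 0)) (nhds (Dr x)))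
    (hDs : ∀ x : ℝ, α < (x : EReal) → (x : EReal) < β →
      Tendsto (fun ε => (ψs (x + ε) - ψs x) / (p (x + ε) - p x))
        (nhdsWithin 0 (Set.Ioi 0)) (nhds (Ds x)))
    (hDs_pos : ∀ᶠ x in leftLimFilter β, 0 < Ds x)
    (L : EReal) (hL0 : 0 ≤ L)
    (hL : Tendsto (fun x => ((Dr x / Ds x : ℝ) : EReal)) (leftLimFilter β) (nhds L)) :
    Tendsto (fun x => ((ψr x / ψs x : ℝ) : EReal)) (leftLimFilter β) (nhds L) :=
  ratio_tendsto_of_right_derivative_ratio_general α β hαβ p ψr ψs Dr Ds hp_mono hp_cont hψr_cont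
    hψs_cont hψs_top hDr hDs hDs_pos L hL
end
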